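/- Let (R, n) be a regular local ring of dimension h, I ⊆ n² an ideal, and suppose A = R/I is a stretched Artinian local ring of socle degree s ≥ 2 with Cohen-Macaulay type τ = h (maximal type). Then there is a minimal generating set x₁, …, x_h of n such that I = ({x₁ x_j}_{2≤j≤h}, {x_i x_j}_{2≤i≤j≤h}, x₁^{s+1}). -/

import Mathlib

open IsLocalRing

/-- The minimal number of generators of a submodule. -/
noncomputable def minGen {R M : Type*} [Ring R] [AddCommGroup M] [Module R M]
    (N : Submodule R M) : ℕ :=
  sInf {n | ∃ s : Finset M, s.card = n ∧ Submodule.span R (s : Set M) = N}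

/-!
Write `A = R/I` with maximal ideal `𝔪`. Since `2` is a unit, polarization gives `y ∈ 𝔪` with
`y² ∉ 𝔪³`, and as `𝔪²` is principal this forces `𝔪ᵗ = (yᵗ)` for all `t ≥ 2`. Hence the socle
meets `𝔪²` only in `(yˢ)`, and `y ∉ socle + 𝔪²`. In the cotangent space `𝔪/𝔪²` the image `W`
of the socle misses `ȳ`, while the socle is generated by lifts of a basis of `W` together with
`yˢ`; so `τ ≤ dim W + 1 ≤ dim 𝔪/𝔪² ≤ h = τ`, and `𝔪` is generated by `y` and `h - 1` socle
elements. Lifted to `R` (Nakayama, as `I ⊆ n²`) these give generators `x₁, …, x_h` of `n` with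
`J ⊆ I` for the displayed ideal `J`, and `nᵗ ⊆ (x₁ᵗ) + J`. A descending induction on `t` then
shows `c x₁ᵗ ∈ I → c x₁ᵗ ∈ J`: a unit `c` would put `x₁ᵗ`, hence `x₁ˢ`, in `I`.
-/

theorem minGen_eq_spanFinrank {R M : Type*} [Ring R] [AddCommGroup M] [Module R M]
    (N : Submodule R M) : minGen N = N.spanFinrank := by
  rw [Submodule.spanFinrank_eq_iInf, minGen, iInf]
  congr 1
  ext n
  simp only [Set.mem_ofPred_eq, Set.mem_range, Subtype.exists, exists_prop]
  exact ⟨fun ⟨s, hs, hN⟩ => ⟨s, hN, hs⟩, fun ⟨s, hN, hs⟩ => ⟨s, hs, hN⟩⟩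

theorem exists_nat_fun_image_Icc_eq_range {α : Type*} (a : α) {n : ℕ} (v : Fin n → α) :
    ∃ x : ℕ → α, x 1 = a ∧ x '' Set.Icc 2 (n + 1) = Set.range v := by
  refine ⟨fun j => if h : 2 ≤ j ∧ j < n + 2 then v ⟨j - 2, by omega⟩ else a, by simp, ?_⟩
  ext w
  constructor
  · rintro ⟨j, ⟨h2, hj⟩, rfl⟩
    refine ⟨⟨j - 2, by omega⟩, ?_⟩
    simp only [dif_pos (show 2 ≤ j ∧ j < n + 2 from ⟨h2, by omega⟩)]
  · rintro ⟨i, rfl⟩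
    refine ⟨i + 2, ⟨by omega, by omega⟩, ?_⟩
    simp only [dif_pos (show 2 ≤ (i : ℕ) + 2 ∧ (i : ℕ) + 2 < n + 2 by omega), Nat.add_sub_cancel]

namespace Ideal

variable {R : Type*} [CommRing R]

theorem sq_le_of_forall_sq_mem (h2 : IsUnit (2 : R)) {N K : Ideal R}
    (h : ∀ a ∈ N, a ^ 2 ∈ K) : N ^ 2 ≤ K := by
  rw [sq, mul_le]
  intro a ha b hb
  have hpol : 2 * (a * b) = (a + b) ^ 2 - a ^ 2 - b ^ 2 := by ring
  rw [← unit_mul_mem_iff_mem K h2, hpol]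
  exact sub_mem (sub_mem (h _ (add_mem ha hb)) (h a ha)) (h b hb)

theorem sq_le_pow_of_sq_le_pow_three {N : Ideal R} (h : N ^ 2 ≤ N ^ 3) :
    ∀ t, 2 ≤ t → N ^ 2 ≤ N ^ t := by
  intro t ht
  induction t, ht using Nat.le_induction with
  | base => exact le_rfl
  | succ t _ ih =>
    calc N ^ 2 ≤ N ^ 3 := h
      _ = N * N ^ 2 := pow_succ' N 2
      _ ≤ N * N ^ t := mul_mono_right ih
      _ = N ^ (t + 1) := (pow_succ' N t).symm

theorem pow_le_span_pow_sup {N J : Ideal R} {a : R} (ha : a ∈ N)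
    (h2 : N ^ 2 ≤ span {a ^ 2} ⊔ J) : ∀ t, 2 ≤ t → N ^ t ≤ span {a ^ t} ⊔ J := by
  intro t ht
  induction t, ht using Nat.le_induction with
  | base => exact h2
  | succ t ht ih =>
    obtain ⟨k, rfl⟩ := Nat.exists_eq_add_of_le' ht
    have haN : span {a ^ (k + 2)} * N ≤ span {a ^ (k + 1)} * (span {a ^ 2} ⊔ J) := by
      rw [pow_succ, ← span_singleton_mul_span_singleton, mul_assoc]
      refine mul_mono_right (le_trans ?_ h2)
      rw [sq]
      exact mul_mono_left ((span_singleton_le_iff_mem N).mpr ha)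
    calc N ^ (k + 2 + 1) = N ^ (k + 2) * N := pow_succ N _
      _ ≤ (span {a ^ (k + 2)} ⊔ J) * N := mul_mono_left ih
      _ = span {a ^ (k + 2)} * N ⊔ J * N := sup_mul _ _ _
      _ ≤ span {a ^ (k + 1)} * (span {a ^ 2} ⊔ J) ⊔ J := sup_le_sup haN mul_le_left
      _ ≤ span {a ^ (k + 2 + 1)} ⊔ J := by
        rw [mul_sup, span_singleton_mul_span_singleton, ← pow_add, sup_assoc]
        exact sup_le_sup_left (sup_le mul_le_right le_rfl) _

theorem sup_sq_le {a : R} {N J : Ideal R} (haN : span {a} * N ≤ J) (hN : N * N ≤ J) :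
    (span {a} ⊔ N) ^ 2 ≤ span {a ^ 2} ⊔ J := by
  rw [sq, sup_mul, mul_sup, mul_sup, span_singleton_mul_span_singleton, ← sq, mul_comm N]
  exact sup_le (sup_le_sup_left haN _) (sup_le haN hN |>.trans le_sup_right)

theorem mem_of_mem_span_singleton_sup {I J : Ideal R} (hJI : J ≤ I) {b r : R}
    (hr : r ∈ span {b} ⊔ J) (hrI : r ∈ I) (hb : ∀ d, d * b ∈ I → d * b ∈ J) : r ∈ J := by
  obtain ⟨p, hp, q, hq, rfl⟩ := Submodule.mem_sup.mp hr
  obtain ⟨d, rfl⟩ := mem_span_singleton'.mp hp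
  exact add_mem (hb d ((add_mem_cancel_right (hJI hq)).mp hrI)) hq

end Ideal

namespace IsLocalRing

variable {R : Type*} [CommRing R] [IsLocalRing R]

section

open Ideal

theorem span_singleton_eq_of_notMem_maximalIdeal_mul {u z : R} (hz : z ∈ span {u})
    (hz' : z ∉ maximalIdeal R * span {u}) : span {u} = span {z} := by
  obtain ⟨c, rfl⟩ := mem_span_singleton'.mp hz
  have hc : IsUnit c := by
    by_contra hc
    exact hz' (mul_mem_mul hc (mem_span_singleton_self u))
  exact (span_singleton_mul_left_unit hc u).symm

theorem exists_pow_eq_span_pow (h2 : IsUnit (2 : R))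
    (hprinc : (maximalIdeal R ^ 2).IsPrincipal)
    (h23 : ¬ maximalIdeal R ^ 2 ≤ maximalIdeal R ^ 3) :
    ∃ y ∈ maximalIdeal R, ∀ t, 2 ≤ t → maximalIdeal R ^ t = span {y ^ t} := by
  obtain ⟨y, hy, hy3⟩ : ∃ y ∈ maximalIdeal R, y ^ 2 ∉ maximalIdeal R ^ 3 := by
    by_contra! h
    exact h23 (sq_le_of_forall_sq_mem h2 h)
  obtain ⟨u, hu⟩ := hprinc.principal
  rw [submodule_span_eq] at hu
  have hsq : maximalIdeal R ^ 2 = span {y ^ 2} := by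
    rw [pow_succ', hu] at hy3
    rw [hu]
    exact span_singleton_eq_of_notMem_maximalIdeal_mul (hu ▸ pow_mem_pow hy 2) hy3
  refine ⟨y, hy, fun t ht => le_antisymm ?_ ?_⟩
  · simpa using pow_le_span_pow_sup (J := ⊥) hy (by rw [hsq, sup_bot_eq]) t ht
  · exact (span_singleton_le_iff_mem _).mpr (pow_mem_pow hy t)

variable (R) in
def socle : Ideal R := (⊥ : Ideal R).colon (maximalIdeal R : Set R)

theorem mem_socle {x : R} : x ∈ socle R ↔ ∀ y ∈ maximalIdeal R, x * y = 0 := by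
  simp only [socle, Submodule.mem_colon, SetLike.mem_coe, smul_eq_mul, Submodule.mem_bot]

theorem socle_le_maximalIdeal (hm : maximalIdeal R ≠ ⊥) : socle R ≤ maximalIdeal R := by
  refine le_maximalIdeal fun htop => hm (eq_bot_iff.mpr fun y hy => ?_)
  simpa using mem_socle.mp (htop ▸ Submodule.mem_top : (1 : R) ∈ socle R) y hy

theorem pow_le_socle {s : ℕ} (hs : maximalIdeal R ^ (s + 1) = ⊥) :
    maximalIdeal R ^ s ≤ socle R := fun x hx =>
  mem_socle.mpr fun y hy => by
    simpa [← pow_succ, hs] using mul_mem_mul hx hy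

theorem socle_inf_pow_le_pow_succ {y : R} {t : ℕ} (hy : y ∈ maximalIdeal R)
    (ht : maximalIdeal R ^ t ≤ span {y ^ t}) (ht1 : maximalIdeal R ^ (t + 1) ≤ span {y ^ (t + 1)})
    (hne : maximalIdeal R ^ (t + 1) ≠ ⊥) :
    socle R ⊓ maximalIdeal R ^ t ≤ maximalIdeal R ^ (t + 1) := by
  rintro v ⟨hvsoc, hvt⟩
  obtain ⟨c, rfl⟩ := mem_span_singleton'.mp (ht hvt)
  by_cases hc : c ∈ maximalIdeal R
  · rw [pow_succ']
    exact mul_mem_mul hc (pow_mem_pow hy t)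
  · have hyt : y ^ t ∈ socle R := (unit_mul_mem_iff_mem _ (notMem_maximalIdeal.mp hc)).mp hvsoc
    refine absurd (eq_bot_iff.mpr (ht1.trans ?_)) hne
    rw [pow_succ, mem_socle.mp hyt y hy, span_singleton_eq_bot.mpr rfl]

theorem socle_inf_sq_le_pow {y : R} {s : ℕ} (hy : y ∈ maximalIdeal R)
    (hpow : ∀ t, 2 ≤ t → maximalIdeal R ^ t = span {y ^ t}) (hs : maximalIdeal R ^ s ≠ ⊥) :
    ∀ t, 2 ≤ t → t ≤ s → socle R ⊓ maximalIdeal R ^ 2 ≤ maximalIdeal R ^ t := by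
  intro t ht hts
  induction t, ht using Nat.le_induction with
  | base => exact inf_le_right
  | succ t ht ih =>
    have hne : maximalIdeal R ^ (t + 1) ≠ ⊥ := fun h =>
      hs (eq_bot_iff.mpr (h ▸ pow_le_pow_right hts))
    calc socle R ⊓ maximalIdeal R ^ 2 ≤ socle R ⊓ maximalIdeal R ^ t :=
          le_inf inf_le_left (ih (by omega))
      _ ≤ maximalIdeal R ^ (t + 1) :=
        socle_inf_pow_le_pow_succ hy (hpow t ht).le (hpow (t + 1) (by omega)).le hne

theorem notMem_socle_sup_sq {y : R} (hy : y ∈ maximalIdeal R) (hy3 : y ^ 2 ∉ maximalIdeal R ^ 3) :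
    y ∉ socle R ⊔ maximalIdeal R ^ 2 := by
  intro hmem
  obtain ⟨σ, hσ, q, hq, rfl⟩ := Submodule.mem_sup.mp hmem
  refine hy3 ?_
  have : (σ + q) ^ 2 = σ * (σ + q) + q * (σ + q) := by ring
  rw [this, mem_socle.mp hσ _ hy, zero_add, pow_succ]
  exact mul_mem_mul hq hy

end

section

open Submodule

theorem toCotangent_mem_span_image_iff {S : Set (maximalIdeal R)} {w : CotangentSpace R} :
    w ∈ span (ResidueField R) ((maximalIdeal R).toCotangent '' S) ↔
      w ∈ (span R S).map (maximalIdeal R).toCotangent := by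
  rw [← restrictScalars_mem R, restrictScalars_span R _ residue_surjective, Submodule.map_span]

theorem mem_span_sup_sq_of_toCotangent_mem_span {S : Set (maximalIdeal R)} {x : maximalIdeal R}
    (hx : (maximalIdeal R).toCotangent x ∈
      span (ResidueField R) ((maximalIdeal R).toCotangent '' S)) :
    (x : R) ∈ Ideal.span (Subtype.val '' S) ⊔ maximalIdeal R ^ 2 := by
  obtain ⟨ξ, hξ, hξx⟩ := toCotangent_mem_span_image_iff.mp hx
  have hξS : (ξ : R) ∈ Ideal.span (Subtype.val '' S) := by
    simpa [Submodule.map_span] using mem_map_of_mem (f := (maximalIdeal R).subtype) hξ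
  have hdiff : (x : R) - ξ ∈ maximalIdeal R ^ 2 := (Ideal.toCotangent_eq _).mp hξx.symm
  simpa using add_mem_sup hξS hdiff

theorem maximalIdeal_eq_span_of_span_toCotangent_eq_top [IsNoetherianRing R]
    {S : Set (maximalIdeal R)}
    (h : span (ResidueField R) ((maximalIdeal R).toCotangent '' S) = ⊤) :
    maximalIdeal R = Ideal.span (Subtype.val '' S) := by
  have := congrArg (map (maximalIdeal R).subtype) (CotangentSpace.span_image_eq_top_iff.mp h)
  rwa [Submodule.map_span, Submodule.map_top, range_subtype, eq_comm] at this

variable (R) in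
/-- The subspace `(V + 𝔪²)/𝔪²` of `𝔪/𝔪²`. -/
noncomputable def cotangentImage (V : Ideal R) : Submodule (ResidueField R) (CotangentSpace R) :=
  span (ResidueField R) ((maximalIdeal R).toCotangent '' {x | (x : R) ∈ V})

theorem exists_lift_spanning_cotangentImage [IsNoetherianRing R] (V : Ideal R) :
    ∃ ξ : Fin (Module.finrank (ResidueField R) (cotangentImage R V)) → maximalIdeal R,
      (∀ i, (ξ i : R) ∈ V) ∧
      span (ResidueField R) ((maximalIdeal R).toCotangent '' Set.range ξ) = cotangentImage R V := by
  set b := Module.finBasis (ResidueField R) (cotangentImage R V)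
  have hlift (i) :
      ∃ ξ ∈ comap (maximalIdeal R).subtype V, (maximalIdeal R).toCotangent ξ = b i := by
    have := toCotangent_mem_span_image_iff.mp (b i).2
    exact span_eq (comap (maximalIdeal R).subtype V) ▸ this
  choose ξ hξV hξb using hlift
  refine ⟨ξ, hξV, ?_⟩
  have : (maximalIdeal R).toCotangent ∘ ξ = (cotangentImage R V).subtype ∘ b := funext hξb
  rw [← Set.range_comp, this, Set.range_comp, ← Submodule.map_span, b.span_eq, Submodule.map_top,
    range_subtype]

theorem toCotangent_notMem_cotangentImage {V : Ideal R} {y : maximalIdeal R}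
    (hy : (y : R) ∉ V ⊔ maximalIdeal R ^ 2) :
    (maximalIdeal R).toCotangent y ∉ cotangentImage R V := by
  intro h
  have hspan : Ideal.span (Subtype.val '' {x : maximalIdeal R | (x : R) ∈ V}) ≤ V :=
    Ideal.span_le.mpr (by rintro _ ⟨x, hx, rfl⟩; exact hx)
  exact hy (sup_le_sup_right hspan _ (mem_span_sup_sq_of_toCotangent_mem_span h))

theorem eq_span_insert_of_span_toCotangent_eq {V : Ideal R} (hV : V ≤ maximalIdeal R) {z : R}
    (hz : z ∈ V) (hVz : V ⊓ maximalIdeal R ^ 2 ≤ Ideal.span {z}) {ι : Type*}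
    {ξ : ι → maximalIdeal R} (hξV : ∀ i, (ξ i : R) ∈ V)
    (hξ : span (ResidueField R) ((maximalIdeal R).toCotangent '' Set.range ξ) =
      cotangentImage R V) :
    V = Ideal.span (insert z (Set.range fun i => (ξ i : R))) := by
  have hξV' : Ideal.span (Set.range fun i => (ξ i : R)) ≤ V :=
    Ideal.span_le.mpr (Set.range_subset_iff.mpr hξV)
  refine le_antisymm (fun w hw => ?_) (Ideal.span_le.mpr (Set.insert_subset hz ?_))
  · have hθw : (maximalIdeal R).toCotangent ⟨w, hV hw⟩ ∈
        span (ResidueField R) ((maximalIdeal R).toCotangent '' Set.range ξ) :=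
      hξ ▸ subset_span ⟨⟨w, hV hw⟩, hw, rfl⟩
    obtain ⟨a, ha, q, hq, rfl⟩ := mem_sup.mp (mem_span_sup_sq_of_toCotangent_mem_span hθw)
    rw [← Set.range_comp] at ha
    have hqz : q ∈ Ideal.span {z} := hVz ⟨(add_mem_cancel_left (hξV' ha)).mp hw, hq⟩
    exact add_mem (Ideal.span_mono (Set.subset_insert _ _) ha)
      (Ideal.span_mono (Set.singleton_subset_iff.mpr (Set.mem_insert _ _)) hqz)
  · exact Set.range_subset_iff.mpr hξV

theorem exists_maximalIdeal_eq_span_insert [IsNoetherianRing R] {V : Ideal R}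
    (hV : V ≤ maximalIdeal R) {y z : R} (hy : y ∈ maximalIdeal R)
    (hyV : y ∉ V ⊔ maximalIdeal R ^ 2) (hz : z ∈ V)
    (hVz : V ⊓ maximalIdeal R ^ 2 ≤ Ideal.span {z})
    (hm : (maximalIdeal R).spanFinrank ≤ V.spanFinrank) :
    ∃ n, n + 1 = V.spanFinrank ∧ ∃ v : Fin n → R,
      (∀ i, v i ∈ V) ∧ maximalIdeal R = Ideal.span (insert y (Set.range v)) := by
  obtain ⟨ξ, hξV, hξ⟩ := exists_lift_spanning_cotangentImage V
  have hθy : (maximalIdeal R).toCotangent ⟨y, hy⟩ ∉ cotangentImage R V :=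
    toCotangent_notMem_cotangentImage hyV
  have hVle : V.spanFinrank ≤ Module.finrank (ResidueField R) (cotangentImage R V) + 1 := by
    rw [congrArg spanFinrank (eq_span_insert_of_span_toCotangent_eq hV hz hVz hξV hξ)]
    refine (spanFinrank_span_le_ncard_of_finite (Set.toFinite _)).trans
      ((Set.ncard_insert_le _ _).trans (Nat.add_le_add_right ?_ 1))
    rw [← Set.image_univ]
    exact (Set.ncard_image_le (Set.toFinite _)).trans (by simp)
  have hsup := finrank_sup_span_singleton hθy
  have hUle := finrank_le
    (cotangentImage R V ⊔ span (ResidueField R) {(maximalIdeal R).toCotangent ⟨y, hy⟩})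
  have hU := spanFinrank_maximalIdeal_eq_finrank_cotangentSpace R
  have hWle : Module.finrank (ResidueField R) (cotangentImage R V) + 1 ≤ V.spanFinrank :=
    hsup.symm.le.trans (hUle.trans (hU.symm.le.trans hm))
  have htop := eq_top_of_finrank_eq
    (hUle.antisymm (hU.symm.le.trans (hm.trans (hVle.trans hsup.symm.le))))
  refine ⟨_, hWle.antisymm hVle, fun i => ξ i, hξV, ?_⟩
  refine (maximalIdeal_eq_span_of_span_toCotangent_eq_top
    (S := insert ⟨y, hy⟩ (Set.range ξ)) ?_).trans ?_
  · rw [Set.image_insert_eq, span_insert, hξ, sup_comm, htop]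
  · rw [Set.image_insert_eq, ← Set.range_comp]
    rfl

end

open Ideal

theorem exists_maximalIdeal_eq_span_socle_of_stretched [IsNoetherianRing R] (h2 : IsUnit (2 : R))
    (hprinc : (maximalIdeal R ^ 2).IsPrincipal) {s : ℕ} (hs : 2 ≤ s)
    (hsoc : maximalIdeal R ^ s ≠ ⊥) (htop : maximalIdeal R ^ (s + 1) = ⊥)
    (hm : (maximalIdeal R).spanFinrank ≤ (socle R).spanFinrank) :
    ∃ y : ℕ → R, y 1 ^ s ≠ 0 ∧
      maximalIdeal R = span (y '' Set.Icc 1 (socle R).spanFinrank) ∧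
      ∀ j ∈ Set.Icc 2 (socle R).spanFinrank, y j ∈ socle R := by
  have h23 : ¬ maximalIdeal R ^ 2 ≤ maximalIdeal R ^ 3 := fun h => hsoc <| eq_bot_iff.mpr <|
    (pow_le_pow_right hs).trans ((sq_le_pow_of_sq_le_pow_three h (s + 1) (by omega)).trans htop.le)
  obtain ⟨y, hy, hpow⟩ := exists_pow_eq_span_pow h2 hprinc h23
  have hy3 : y ^ 2 ∉ maximalIdeal R ^ 3 := fun h =>
    h23 (hpow 2 le_rfl ▸ (span_singleton_le_iff_mem _).mpr h)
  have hys : y ^ s ≠ 0 := fun h => hsoc (by rw [hpow s hs, h, span_singleton_eq_bot.mpr rfl])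
  have hm0 : maximalIdeal R ≠ ⊥ := fun h =>
    hsoc (eq_bot_iff.mpr (h ▸ pow_le_self (by omega)))
  obtain ⟨n, hn, v, hvsoc, hmv⟩ := exists_maximalIdeal_eq_span_insert
    (socle_le_maximalIdeal hm0) hy (notMem_socle_sup_sq hy hy3)
    (pow_le_socle htop (pow_mem_pow hy s))
    ((socle_inf_sq_le_pow hy hpow hsoc s hs le_rfl).trans (hpow s hs).le) hm
  obtain ⟨x, hx1, hxv⟩ := exists_nat_fun_image_Icc_eq_range y v
  refine ⟨x, hx1 ▸ hys, ?_, fun j hj => ?_⟩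
  · rw [← hn, ← Set.insert_Icc_add_one_left_eq_Icc (by omega), one_add_one_eq_two,
      Set.image_insert_eq, hx1, hxv, hmv]
  · obtain ⟨i, hi⟩ := hxv ▸ Set.mem_image_of_mem x (hn ▸ hj)
    exact hi ▸ hvsoc i

theorem maximalIdeal_eq_of_map_eq [IsNoetherianRing R] {I N : Ideal R}
    (hI : I ≤ maximalIdeal R ^ 2)
    (hN : N.map (Ideal.Quotient.mk I) = (maximalIdeal R).map (Ideal.Quotient.mk I)) :
    maximalIdeal R = N := by
  have hNI : N ⊔ I = maximalIdeal R := by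
    have := congrArg (comap (Ideal.Quotient.mk I)) hN
    rwa [comap_map_of_surjective _ Quotient.mk_surjective,
      comap_map_of_surjective _ Quotient.mk_surjective, ← RingHom.ker_eq_comap_bot, mk_ker,
      sup_eq_left.mpr (hI.trans (pow_le_self two_ne_zero))] at this
  refine le_antisymm (Submodule.le_of_le_smul_of_le_jacobson_bot
    (IsNoetherian.noetherian _) (jacobson_eq_maximalIdeal ⊥ bot_ne_top).ge ?_)
    (hNI ▸ le_sup_left)
  rw [smul_eq_mul, ← sq]
  exact hNI.symm.le.trans (sup_le_sup_left hI _)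

theorem mul_pow_mem_of_mul_pow_mem {I J : Ideal R} (hJI : J ≤ I) {a : R}
    (ha : a ∈ maximalIdeal R) (hpow : ∀ t, 2 ≤ t → maximalIdeal R ^ t ≤ span {a ^ t} ⊔ J)
    {s : ℕ} (hs : a ^ s ∉ I) (hs1 : a ^ (s + 1) ∈ J) {t : ℕ} (ht : 2 ≤ t) (hts : t ≤ s + 1)
    (c : R) (hc : c * a ^ t ∈ I) : c * a ^ t ∈ J := by
  induction hts using Nat.decreasingInduction generalizing c with
  | self => exact mul_mem_left _ _ hs1
  | of_succ t hts ih =>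
    by_cases hcm : c ∈ maximalIdeal R
    · refine mem_of_mem_span_singleton_sup hJI (hpow (t + 1) (by omega) ?_) hc
        (ih (by omega))
      rw [pow_succ']
      exact mul_mem_mul hcm (pow_mem_pow ha t)
    · have hat : a ^ t ∈ I := (unit_mul_mem_iff_mem _ (notMem_maximalIdeal.mp hcm)).mp hc
      refine absurd ?_ hs
      rw [← Nat.sub_add_cancel (show t ≤ s by omega), pow_add]
      exact mul_mem_left _ _ hat

theorem le_of_le_sq_of_pow_le {I J : Ideal R} (hJI : J ≤ I) (hI : I ≤ maximalIdeal R ^ 2)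
    {a : R} (ha : a ∈ maximalIdeal R)
    (hpow : ∀ t, 2 ≤ t → maximalIdeal R ^ t ≤ span {a ^ t} ⊔ J)
    {s : ℕ} (hs : 1 ≤ s) (has : a ^ s ∉ I) (has1 : a ^ (s + 1) ∈ J) : I ≤ J := fun f hf =>
  mem_of_mem_span_singleton_sup hJI (hpow 2 le_rfl (hI hf)) hf
    (mul_pow_mem_of_mul_pow_mem hJI ha hpow has has1 le_rfl (by omega))

theorem eq_span_of_mul_generators_mem {I : Ideal R} (hI : I ≤ maximalIdeal R ^ 2) {h s : ℕ}
    (hh : 1 ≤ h) (hs : 1 ≤ s) {x : ℕ → R} (hx : maximalIdeal R = span (x '' Set.Icc 1 h))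
    (hmul : ∀ i ∈ Set.Icc 1 h, ∀ j ∈ Set.Icc 2 h, x i * x j ∈ I)
    (hxs : x 1 ^ s ∉ I) (hxs1 : x 1 ^ (s + 1) ∈ I) :
    I = span ({p | ∃ j, 2 ≤ j ∧ j ≤ h ∧ p = x 1 * x j} ∪
      {p | ∃ i j, 2 ≤ i ∧ i ≤ j ∧ j ≤ h ∧ p = x i * x j} ∪ {x 1 ^ (s + 1)}) := by
  set J := span ({p | ∃ j, 2 ≤ j ∧ j ≤ h ∧ p = x 1 * x j} ∪
    {p | ∃ i j, 2 ≤ i ∧ i ≤ j ∧ j ≤ h ∧ p = x i * x j} ∪ {x 1 ^ (s + 1)})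
  have hJI : J ≤ I := by
    refine span_le.mpr ?_
    rintro _ ((⟨j, h2j, hjh, rfl⟩ | ⟨i, j, h2i, hij, hjh, rfl⟩) | rfl)
    · exact hmul 1 ⟨le_rfl, hh⟩ j ⟨h2j, hjh⟩
    · exact hmul i ⟨by omega, by omega⟩ j ⟨by omega, hjh⟩
    · exact hxs1
  set N := span (x '' Set.Icc 2 h)
  have hmN : maximalIdeal R = span {x 1} ⊔ N := by
    rw [hx, ← Set.insert_Icc_add_one_left_eq_Icc hh, one_add_one_eq_two, Set.image_insert_eq,
      span_insert]
  have hx1N : span {x 1} * N ≤ J := by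
    rw [span_mul_span', span_le]
    rintro _ ⟨_, rfl, _, ⟨j, ⟨h2j, hjh⟩, rfl⟩, rfl⟩
    exact subset_span (Or.inl (Or.inl ⟨j, h2j, hjh, rfl⟩))
  have hNN : N * N ≤ J := by
    rw [span_mul_span', span_le]
    rintro _ ⟨_, ⟨i, ⟨h2i, hih⟩, rfl⟩, _, ⟨j, ⟨h2j, hjh⟩, rfl⟩, rfl⟩
    rcases le_total i j with hij | hji
    · exact subset_span (Or.inl (Or.inr ⟨i, j, h2i, hij, hjh, rfl⟩))
    · exact subset_span (Or.inl (Or.inr ⟨j, i, h2j, hji, hih, mul_comm _ _⟩))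
  have hx1 : x 1 ∈ maximalIdeal R := hx ▸ subset_span ⟨1, ⟨le_rfl, hh⟩, rfl⟩
  have hpow := pow_le_span_pow_sup hx1 (by rw [hmN]; exact sup_sq_le hx1N hNN)
  exact le_antisymm (le_of_le_sq_of_pow_le hJI hI hx1 hpow hs hxs (subset_span (Or.inr rfl))) hJI

end IsLocalRing

theorem stretched_maximal_type_structure
    (R : Type*) [CommRing R] [IsLocalRing R] [IsNoetherianRing R]
    [CharZero (ResidueField R)]
    (h : ℕ) (hh : 1 ≤ h)
    (hreg : ∃ s : Finset R, s.card = h ∧ Ideal.span (s : Set R) = maximalIdeal R)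
    (I : Ideal R) (hI : I ≤ (maximalIdeal R) ^ 2)
    (s : ℕ) (hs : 2 ≤ s)
    -- `A` is stretched:
    (hstretched : minGen ((Ideal.map (Ideal.Quotient.mk I) (maximalIdeal R)) ^ 2) = 1)
    -- socle degree `s`:
    (hsoc : (Ideal.map (Ideal.Quotient.mk I) (maximalIdeal R)) ^ s ≠ ⊥)
    (htop : (Ideal.map (Ideal.Quotient.mk I) (maximalIdeal R)) ^ (s + 1) = ⊥)
    -- Cohen–Macaulay type `τ = h`:
    (htype : minGen (Submodule.colon (⊥ : Ideal (R ⧸ I)) ((Ideal.map (Ideal.Quotient.mk I) (maximalIdeal R) : Ideal (R ⧸ I)) : Set (R ⧸ I))) = h) :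
    ∃ x : ℕ → R,
      maximalIdeal R = Ideal.span ((fun i => x i) '' Set.Icc 1 h) ∧
      I = Ideal.span
        ({p | ∃ j, 2 ≤ j ∧ j ≤ h ∧ p = x 1 * x j} ∪
         {p | ∃ i j, 2 ≤ i ∧ i ≤ j ∧ j ≤ h ∧ p = x i * x j} ∪
         {x 1 ^ (s + 1)}) := by
  have : Nontrivial (R ⧸ I) := Ideal.Quotient.nontrivial_iff.mpr <|
    ne_top_of_le_ne_top (maximalIdeal.isMaximal R).ne_top (hI.trans (Ideal.pow_le_self two_ne_zero))
  have : IsLocalRing (R ⧸ I) := .of_surjective' _ Ideal.Quotient.mk_surjective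
  have hmap := map_maximalIdeal_of_surjective _ (Ideal.Quotient.mk_surjective (I := I))
  rw [hmap, minGen_eq_spanFinrank] at hstretched htype
  rw [hmap] at hsoc htop
  have h2 : IsUnit (2 : R ⧸ I) := by
    have h2R : IsUnit (2 : R) :=
      (residue_ne_zero_iff_isUnit 2).mp (by rw [map_ofNat]; exact two_ne_zero)
    exact map_ofNat (Ideal.Quotient.mk I) 2 ▸ h2R.map _
  have hm : (maximalIdeal (R ⧸ I)).spanFinrank ≤ (socle (R ⧸ I)).spanFinrank := by
    obtain ⟨T, hT, hTspan⟩ := hreg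
    rw [← hmap, ← hTspan, Ideal.map_span, socle, htype, ← hT]
    exact (Submodule.spanFinrank_span_le_ncard_of_finite (T.finite_toSet.image _)).trans
      ((Set.ncard_image_le T.finite_toSet).trans (Set.ncard_coe_finset T).le)
  obtain ⟨y, hys, hy, hysoc⟩ := exists_maximalIdeal_eq_span_socle_of_stretched h2
    ((Submodule.spanFinrank_eq_one_iff _).mp hstretched).1 hs hsoc htop hm
  rw [socle, htype] at hy hysoc
  set x := fun i => Function.surjInv Ideal.Quotient.mk_surjective (y i)
  have hπx (i : ℕ) : Ideal.Quotient.mk I (x i) = y i := Function.surjInv_eq _ _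
  have hx : maximalIdeal R = Ideal.span (x '' Set.Icc 1 h) := maximalIdeal_eq_of_map_eq hI (by
    rw [Ideal.map_span, ← Set.image_comp, hmap, hy]
    exact congrArg _ (Set.image_congr fun i _ => hπx i))
  refine ⟨x, hx, eq_span_of_mul_generators_mem hI hh (by omega) hx (fun i hi j hj => ?_) ?_ ?_⟩
  · rw [← Ideal.Quotient.eq_zero_iff_mem, map_mul, hπx, hπx, mul_comm]
    exact mem_socle.mp (hysoc j hj) _ (hy ▸ Ideal.subset_span (Set.mem_image_of_mem y hi))
  · rwa [← Ideal.Quotient.eq_zero_iff_mem, map_pow, hπx]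
  · rw [← Ideal.Quotient.eq_zero_iff_mem, map_pow, hπx, ← Submodule.mem_bot (R ⧸ I), ← htop]
    exact Ideal.pow_mem_pow (hy ▸ Ideal.subset_span (Set.mem_image_of_mem y ⟨le_rfl, hh⟩)) _
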